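/- arXiv:2402.10726 — 6 statements merged into one kernel-verified Lean document; each statement's English description precedes it below -/
import Mathlib

section
/- The lower bound min_pars is valid: if a lifted action with k parameters explains every transition in a set 𝒮 (via per-transition substitutions), then k is at least the maximum, over transitions R ∈ 𝒮, of the number of distinct objects appearing as arguments of facts that change truth value in R. -/
def ground {P O : Type*} {k : ℕ} (σ : Fin k → O) (f : P × List (Fin k)) : P × List O :=
  (f.1, f.2.map σ)

/-- If a lifted action with `k` parameters explains every transition in `𝒮`
(via per-transition substitutions), then `k` is at least the number of distinct
objects appearing as arguments of facts that change truth value in each transition,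
hence at least the maximum of these numbers (`min_pars`). -/
theorem stmt5 {P O : Type*} [DecidableEq P] [DecidableEq O] {k : ℕ}
    (pre add del : Finset (P × List (Fin k)))
    (𝒮 : Finset (Finset (P × List O) × Finset (P × List O)))
    (hexp : ∀ R ∈ 𝒮, ∃ σ : Fin k → O,
      (∀ f ∈ pre, ground σ f ∈ R.1) ∧
      R.2 = (R.1 \ del.image (ground σ)) ∪ add.image (ground σ)) :
    ∀ R ∈ 𝒮,
      (((R.1 \ R.2) ∪ (R.2 \ R.1)).biUnion (fun g => g.2.toFinset)).card ≤ k := by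
  intro R hR
  obtain ⟨σ, -, heq⟩ := hexp R hR
  calc (((R.1 \ R.2) ∪ (R.2 \ R.1)).biUnion (fun g => g.2.toFinset)).card
      ≤ (Finset.univ.image σ).card := by
        apply Finset.card_le_card
        intro o ho
        rw [Finset.mem_biUnion] at ho
        obtain ⟨g, hg, hog⟩ := ho
        rw [List.mem_toFinset] at hog
        have : ∃ f, g = ground σ f := by
          rw [Finset.mem_union, Finset.mem_sdiff, Finset.mem_sdiff] at hg
          rcases hg with ⟨h1, h2⟩ | ⟨h2, h1⟩
          · rw [heq, Finset.mem_union, Finset.mem_sdiff] at h2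
            push_neg at h2
            obtain ⟨f, -, hf⟩ := Finset.mem_image.mp (h2.1 h1)
            exact ⟨f, hf.symm⟩
          · rw [heq, Finset.mem_union] at h2
            rcases h2 with h2 | h2
            · exact absurd (Finset.mem_sdiff.mp h2).1 h1
            · obtain ⟨f, -, hf⟩ := Finset.mem_image.mp h2
              exact ⟨f, hf.symm⟩
        obtain ⟨f, rfl⟩ := this
        simp only [ground, List.mem_map] at hog
        obtain ⟨i, -, rfl⟩ := hog
        exact Finset.mem_image_of_mem σ (Finset.mem_univ i)
    _ ≤ k := le_trans Finset.card_image_le (by simp)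
end

section
/- The min_pars lower bound can be strict: there exist two transitions R₁ = (∅, {p(a)}) and R₂ = ({p(a),p(b)}, {p(b)}) over a unary predicate p and two objects a, b such that no lifted action with one parameter explains both transitions, but some lifted action with two parameters does. -/
/-- A unary predicate `p` applied to an object is identified with the object itself;
a lifted action with `k` parameters over `p` has pre/add/del sets of lifted facts `p(xᵢ)`,
identified with elements of `Fin k`. It explains a transition `(S_b, S_a)` via `σ`
iff `pre·σ ⊆ S_b` and `S_a = (S_b \ del·σ) ∪ add·σ`. -/
def Explains {O : Type*} [DecidableEq O] {k : ℕ}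
    (pre add del : Finset (Fin k)) (σ : Fin k → O)
    (Sb Sa : Finset O) : Prop :=
  pre.image σ ⊆ Sb ∧ Sa = (Sb \ del.image σ) ∪ add.image σ

namespace Explains

variable {O : Type*} [DecidableEq O] {k : ℕ} {pre add del : Finset (Fin k)} {σ : Fin k → O}
  {Sb Sa : Finset O}

theorem image_add_subset (h : Explains pre add del σ Sb Sa) : add.image σ ⊆ Sa :=
  h.2 ▸ Finset.subset_union_right

theorem sdiff_image_del_subset (h : Explains pre add del σ Sb Sa) : Sb \ del.image σ ⊆ Sa :=
  h.2 ▸ Finset.subset_union_left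

theorem image_add_eq_of_empty (h : Explains pre add del σ ∅ Sa) : add.image σ = Sa := by
  simp [h.2]

end Explains

theorem Finset.image_subset_singleton_of_fin_one {O : Type*} [DecidableEq O]
    (s : Finset (Fin 1)) (σ : Fin 1 → O) : s.image σ ⊆ {σ 0} := by
  intro x hx
  obtain ⟨i, -, rfl⟩ := Finset.mem_image.mp hx
  simp [Subsingleton.elim i 0]

/-- With a single parameter, both the added and the deleted fact of the second transition
are `p(σ₂ 0)`; the first transition forces something to be added, so `σ₂ 0 = b`, and then
`p(a)` can never be deleted. -/
theorem not_exists_explains_fin_one {O : Type*} [DecidableEq O] {a b : O} (hab : a ≠ b) :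
    ¬ ∃ (pre add del : Finset (Fin 1)) (σ₁ σ₂ : Fin 1 → O),
        Explains pre add del σ₁ (∅ : Finset O) {a} ∧
        Explains pre add del σ₂ ({a, b} : Finset O) {b} := by
  rintro ⟨pre, add, del, σ₁, σ₂, h₁, h₂⟩
  have hadd : (0 : Fin 1) ∈ add := by
    obtain ⟨i, hi⟩ : add.Nonempty := by
      simpa using congrArg Finset.Nonempty h₁.image_add_eq_of_empty
    exact Subsingleton.elim i 0 ▸ hi
  have hσ₂ : σ₂ 0 = b :=
    Finset.mem_singleton.mp (h₂.image_add_subset (Finset.mem_image_of_mem σ₂ hadd))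
  have ha_kept : a ∈ ({a, b} : Finset O) \ del.image σ₂ := by
    refine Finset.mem_sdiff.mpr ⟨by simp, fun ha_del => hab ?_⟩
    simpa [hσ₂] using del.image_subset_singleton_of_fin_one σ₂ ha_del
  exact hab (Finset.mem_singleton.mp (h₂.sdiff_image_del_subset ha_kept))

theorem exists_explains_fin_two {O : Type*} [DecidableEq O] (a b : O) :
    ∃ (pre add del : Finset (Fin 2)) (σ₁ σ₂ : Fin 2 → O),
        Explains pre add del σ₁ (∅ : Finset O) {a} ∧
        Explains pre add del σ₂ ({a, b} : Finset O) {b} := by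
  refine ⟨∅, {0}, {1}, ![a, a], ![b, a], ⟨by simp, by simp⟩, ⟨by simp, ?_⟩⟩
  ext x
  simp only [Finset.image_singleton, Matrix.cons_val_zero, Matrix.cons_val_one,
    Finset.mem_union, Finset.mem_sdiff, Finset.mem_insert, Finset.mem_singleton]
  tauto

theorem stmt6 {O : Type*} [DecidableEq O] (a b : O) (hab : a ≠ b) :
    (¬ ∃ (pre add del : Finset (Fin 1)) (σ₁ σ₂ : Fin 1 → O),
        Explains pre add del σ₁ (∅ : Finset O) {a} ∧
        Explains pre add del σ₂ ({a, b} : Finset O) {b}) ∧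
    (∃ (pre add del : Finset (Fin 2)) (σ₁ σ₂ : Fin 2 → O),
        Explains pre add del σ₁ (∅ : Finset O) {a} ∧
        Explains pre add del σ₂ ({a, b} : Finset O) {b}) :=
  ⟨not_exists_explains_fin_one hab, exists_explains_fin_two a b⟩
end

section
/- No single-parameter lifted action over a unary predicate p can explain both the transition (∅, {p(a)}) and the transition ({p(a),p(b)}, {p(b)}), where a ≠ b. -/
namespace Explains

variable {O : Type*} [DecidableEq O] {k : ℕ} {pre add del : Finset (Fin k)} {σ : Fin k → O}
  {Sb Sa : Finset O}

theorem eq_image_add_of_empty (h : Explains pre add del σ ∅ Sa) : Sa = add.image σ := by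
  simpa using h.2

end Explains

/-- No single-parameter lifted action over a unary predicate `p` explains both
`(∅, {p(a)})` and `({p(a),p(b)}, {p(b)})` when `a ≠ b`. -/
theorem stmt7 {O : Type*} [DecidableEq O] (a b : O) (hab : a ≠ b)
    (pre add del : Finset (Fin 1)) (σ₁ σ₂ : Fin 1 → O) :
    ¬ (Explains pre add del σ₁ (∅ : Finset O) {a} ∧
       Explains pre add del σ₂ ({a, b} : Finset O) {b}) := by
  rintro ⟨h₁, h₂⟩
  have hadd : (0 : Fin 1) ∈ add := by
    obtain ⟨i, hi⟩ : add.Nonempty := by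
      simpa using congrArg Finset.Nonempty h₁.eq_image_add_of_empty
    rwa [Fin.eq_zero i] at hi
  -- The one parameter is added in both transitions, so in the second it must be `b` ...
  have hσ₂ : σ₂ 0 = b := by
    simpa using h₂.image_add_subset (Finset.mem_image_of_mem σ₂ hadd)
  -- ... and then `a` cannot be deleted, yet it disappears.
  have ha_del : a ∉ del.image σ₂ := fun ha =>
    hab (by simpa [hσ₂] using del.image_subset_singleton_of_fin_one σ₂ ha)
  have ha : a ∈ ({b} : Finset O) :=
    h₂.sdiff_image_del_subset (Finset.mem_sdiff.mpr ⟨by simp, ha_del⟩)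
  exact hab (Finset.mem_singleton.mp ha)
end

section
/- In the graph-isomorphism reduction, if the synthesis instance built from graphs G₁ and G₂ (with equal numbers of vertices, no isolated vertices, and k = |V₁| parameters) admits a lifted action explaining both transitions via substitutions σ₁ and σ₂, then σ₁ is a bijection from the parameter set onto V₁. -/
/-- Grounding a lifted `edge` fact (over `k` parameters) by a substitution. -/
def groundE {O : Type*} {k : ℕ} (σ : Fin k → O) (e : Fin k × Fin k) : O × O :=
  (σ e.1, σ e.2)

/-- In the graph-isomorphism reduction, if the synthesis instance built from `G₁`, `G₂`
(equal vertex counts `k`, disjoint vertex sets, no isolated vertices) admits a lifted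
action with `k` parameters explaining both transitions via `σ₁`, `σ₂`, then `σ₁` is a
bijection from the parameter set onto `V₁`. -/
theorem stmt12 {O : Type*} [DecidableEq O] {k : ℕ}
    (V₁ V₂ : Finset O) (E₁ E₂ : Finset (O × O))
    (hdisj : Disjoint V₁ V₂) (hk₁ : V₁.card = k) (hk₂ : V₂.card = k)
    (hE₁ : ∀ e ∈ E₁, e.1 ∈ V₁ ∧ e.2 ∈ V₁) (hE₂ : ∀ e ∈ E₂, e.1 ∈ V₂ ∧ e.2 ∈ V₂)
    (hnoiso₁ : ∀ v ∈ V₁, ∃ e ∈ E₁, e.1 = v ∨ e.2 = v)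
    (hnoiso₂ : ∀ v ∈ V₂, ∃ e ∈ E₂, e.1 = v ∨ e.2 = v)
    (pre add del : Finset (Fin k × Fin k)) (σ₁ σ₂ : Fin k → O)
    (h₁ : (∀ f ∈ pre, groundE σ₁ f ∈ (∅ : Finset (O × O))) ∧
      E₁ = ((∅ : Finset (O × O)) \ del.image (groundE σ₁)) ∪ add.image (groundE σ₁))
    (h₂ : (∀ f ∈ pre, groundE σ₂ f ∈ (∅ : Finset (O × O))) ∧
      E₂ = ((∅ : Finset (O × O)) \ del.image (groundE σ₂)) ∪ add.image (groundE σ₂)) :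
    Function.Injective σ₁ ∧ Finset.image σ₁ Finset.univ = V₁ := by
  have hE : E₁ = add.image (groundE σ₁) := by
    simpa using h₁.2
  have hsub : V₁ ⊆ Finset.image σ₁ Finset.univ := by
    intro v hv
    obtain ⟨e, he, hve⟩ := hnoiso₁ v hv
    rw [hE] at he
    obtain ⟨f, _, hf⟩ := Finset.mem_image.mp he
    rcases hve with h | h
    · exact Finset.mem_image.mpr ⟨f.1, Finset.mem_univ _, by
        rw [← h, ← hf]; rfl⟩
    · exact Finset.mem_image.mpr ⟨f.2, Finset.mem_univ _, by
        rw [← h, ← hf]; rfl⟩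
  have hcard : (Finset.image σ₁ Finset.univ).card ≤ V₁.card := by
    rw [hk₁]
    simpa using Finset.card_image_le (s := (Finset.univ : Finset (Fin k))) (f := σ₁)
  have heq : Finset.image σ₁ Finset.univ = V₁ :=
    (Finset.eq_of_subset_of_card_le hsub hcard).symm
  refine ⟨?_, heq⟩
  have : (Finset.image σ₁ Finset.univ).card = (Finset.univ : Finset (Fin k)).card := by
    rw [heq, hk₁]; simp
  have hinj := Finset.injOn_of_card_image_eq this
  intro a b hab
  exact hinj (Finset.mem_univ a) (Finset.mem_univ b) hab
end

section
/- Completeness direction of the reduction: if f : V₁ → V₂ is a graph isomorphism between G₁ and G₂, then there exists a lifted action with |V₁| parameters (one parameter p_v per vertex v ∈ V₁, empty preconditions and delete effects, add effects {edge(p_v, p_{v'}) : (v,v') ∈ E₁}) and substitutions σ₁(p_v) = v and σ₂ = f ∘ σ₁ that ground the action consistently with both transitions of the constructed synthesis instance. -/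
/-! Take an enumeration σ₁ of V₁ as the parameters and, as add effects, the parameter pairs
that σ₁ grounds to edges of E₁. Grounding the same pairs through f ∘ σ₁ yields the image of E₁
under f × f, which is E₂ since f maps V₁ onto V₂ and preserves and reflects edges. -/

namespace Finset

variable {O : Type*}

noncomputable def enum (s : Finset O) (i : Fin s.card) : O :=
  s.equivFin.symm i

theorem enum_injective (s : Finset O) : Function.Injective s.enum :=
  Subtype.val_injective.comp s.equivFin.symm.injective

theorem range_enum (s : Finset O) : Set.range s.enum = s := by
  ext x
  constructor
  · rintro ⟨i, rfl⟩
    exact (s.equivFin.symm i).2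
  · intro hx
    exact ⟨s.equivFin ⟨x, hx⟩, by simp [enum]⟩

theorem image_enum_univ [DecidableEq O] (s : Finset O) : univ.image s.enum = s := by
  rw [← coe_inj, coe_image, coe_univ, Set.image_univ, range_enum]

end Finset

theorem groundE_comp {O P : Type*} {k : ℕ} (f : O → P) (σ : Fin k → O) :
    groundE (f ∘ σ) = Prod.map f f ∘ groundE σ :=
  rfl

section Lifting

variable {O : Type*} [DecidableEq O] {k : ℕ}

def liftEdges (σ : Fin k → O) (E : Finset (O × O)) : Finset (Fin k × Fin k) :=
  Finset.univ.filter fun p => groundE σ p ∈ E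

theorem image_groundE_liftEdges (σ : Fin k → O) (E : Finset (O × O))
    (hE : ∀ e ∈ E, e.1 ∈ Set.range σ ∧ e.2 ∈ Set.range σ) :
    (liftEdges σ E).image (groundE σ) = E := by
  ext e
  simp only [liftEdges, Finset.mem_image, Finset.mem_filter, Finset.mem_univ, true_and]
  constructor
  · rintro ⟨p, hp, rfl⟩
    exact hp
  · intro he
    obtain ⟨⟨i, hi⟩, ⟨j, hj⟩⟩ := hE e he
    exact ⟨(i, j), by simpa [groundE, hi, hj] using he, by simp [groundE, hi, hj]⟩

end Lifting

theorem Finset.image_prodMap_eq_of_edge_iff {O P : Type*} [DecidableEq P]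
    {V₁ : Finset O} {V₂ : Finset P} {E₁ : Finset (O × O)} {E₂ : Finset (P × P)} {f : O → P}
    (hE₁ : ∀ e ∈ E₁, e.1 ∈ V₁ ∧ e.2 ∈ V₁) (hE₂ : ∀ e ∈ E₂, e.1 ∈ V₂ ∧ e.2 ∈ V₂)
    (hsurj : V₁.image f = V₂)
    (hedge : ∀ u ∈ V₁, ∀ v ∈ V₁, ((u, v) ∈ E₁ ↔ (f u, f v) ∈ E₂)) :
    E₁.image (Prod.map f f) = E₂ := by
  ext ⟨a, b⟩
  simp only [Finset.mem_image, Prod.exists, Prod.map, Prod.mk.injEq]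
  constructor
  · rintro ⟨u, v, huv, rfl, rfl⟩
    obtain ⟨hu, hv⟩ := hE₁ _ huv
    exact (hedge u hu v hv).mp huv
  · intro hab
    obtain ⟨ha, hb⟩ := hE₂ _ hab
    rw [← hsurj, Finset.mem_image] at ha hb
    obtain ⟨u, hu, rfl⟩ := ha
    obtain ⟨v, hv, rfl⟩ := hb
    exact ⟨u, v, (hedge u hu v hv).mpr hab, rfl, rfl⟩

theorem stmt13_general {O : Type*} [DecidableEq O]
    (V₁ V₂ : Finset O) (E₁ E₂ : Finset (O × O))
    (hE₁ : ∀ e ∈ E₁, e.1 ∈ V₁ ∧ e.2 ∈ V₁) (hE₂ : ∀ e ∈ E₂, e.1 ∈ V₂ ∧ e.2 ∈ V₂)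
    (f : O → O)
    (hsurj : V₁.image f = V₂)
    (hedge : ∀ u ∈ V₁, ∀ v ∈ V₁, ((u, v) ∈ E₁ ↔ (f u, f v) ∈ E₂)) :
    ∃ (pre add del : Finset (Fin V₁.card × Fin V₁.card)) (σ₁ σ₂ : Fin V₁.card → O),
      pre = ∅ ∧ del = ∅ ∧
      Function.Injective σ₁ ∧ Finset.image σ₁ Finset.univ = V₁ ∧
      σ₂ = f ∘ σ₁ ∧
      add.image (groundE σ₁) = E₁ ∧
      ((∀ g ∈ pre, groundE σ₁ g ∈ (∅ : Finset (O × O))) ∧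
        E₁ = ((∅ : Finset (O × O)) \ del.image (groundE σ₁)) ∪ add.image (groundE σ₁)) ∧
      ((∀ g ∈ pre, groundE σ₂ g ∈ (∅ : Finset (O × O))) ∧
        E₂ = ((∅ : Finset (O × O)) \ del.image (groundE σ₂)) ∪ add.image (groundE σ₂)) := by
  set σ := V₁.enum
  have hground₁ : (liftEdges σ E₁).image (groundE σ) = E₁ :=
    image_groundE_liftEdges σ E₁ fun e he => by
      simpa only [σ, Finset.range_enum, Finset.mem_coe] using hE₁ e he
  have hground₂ : (liftEdges σ E₁).image (groundE (f ∘ σ)) = E₂ := by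
    rw [groundE_comp, ← Finset.image_image, hground₁]
    exact Finset.image_prodMap_eq_of_edge_iff hE₁ hE₂ hsurj hedge
  refine ⟨∅, liftEdges σ E₁, ∅, σ, f ∘ σ, rfl, rfl, V₁.enum_injective, V₁.image_enum_univ, rfl,
    hground₁, ⟨by simp, by simp [hground₁]⟩, ⟨by simp, by simp [hground₂]⟩⟩

/-- Completeness direction of the reduction: a graph isomorphism `f : G₁ → G₂` yields a
lifted action with `|V₁|` parameters (empty preconditions and delete effects, add effects
the lifted edges of `E₁`, with `σ₁` enumerating `V₁` bijectively and `σ₂ = f ∘ σ₁`) that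
is grounded consistently with both transitions of the constructed synthesis instance. -/
theorem stmt13 {O : Type*} [DecidableEq O]
    (V₁ V₂ : Finset O) (E₁ E₂ : Finset (O × O))
    (hdisj : Disjoint V₁ V₂)
    (hE₁ : ∀ e ∈ E₁, e.1 ∈ V₁ ∧ e.2 ∈ V₁) (hE₂ : ∀ e ∈ E₂, e.1 ∈ V₂ ∧ e.2 ∈ V₂)
    (f : O → O)
    (hmap : ∀ v ∈ V₁, f v ∈ V₂)
    (hinj : Set.InjOn f ↑V₁)
    (hsurj : V₁.image f = V₂)
    (hedge : ∀ u ∈ V₁, ∀ v ∈ V₁, ((u, v) ∈ E₁ ↔ (f u, f v) ∈ E₂)) :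
    ∃ (pre add del : Finset (Fin V₁.card × Fin V₁.card)) (σ₁ σ₂ : Fin V₁.card → O),
      pre = ∅ ∧ del = ∅ ∧
      Function.Injective σ₁ ∧ Finset.image σ₁ Finset.univ = V₁ ∧
      σ₂ = f ∘ σ₁ ∧
      add.image (groundE σ₁) = E₁ ∧
      ((∀ g ∈ pre, groundE σ₁ g ∈ (∅ : Finset (O × O))) ∧
        E₁ = ((∅ : Finset (O × O)) \ del.image (groundE σ₁)) ∪ add.image (groundE σ₁)) ∧
      ((∀ g ∈ pre, groundE σ₂ g ∈ (∅ : Finset (O × O))) ∧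
        E₂ = ((∅ : Finset (O × O)) \ del.image (groundE σ₂)) ∪ add.image (groundE σ₂)) :=
  stmt13_general V₁ V₂ E₁ E₂ hE₁ hE₂ f hsurj hedge
end

section
/- Soundness direction of the reduction: if a lifted action with k = |V₁| = |V₂| parameters is grounded consistently with both transitions of the constructed instance via substitutions σ₁ and σ₂, then G₁ and G₂ are isomorphic, and σ₂ ∘ σ₁⁻¹ is an isomorphism from G₁ to G₂. -/
/-- Soundness direction of the reduction: if a lifted action with `k = |V₁| = |V₂|`
parameters is grounded consistently with both transitions via `σ₁` and `σ₂`, then `G₁`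
and `G₂` are isomorphic, the isomorphism being `σ₂ ∘ σ₁⁻¹` (expressed as an `f` that
agrees with `σ₂` after `σ₁`, is a bijection from `V₁` to `V₂`, and preserves edges). -/
theorem stmt14 {O : Type*} [DecidableEq O] {k : ℕ}
    (V₁ V₂ : Finset O) (E₁ E₂ : Finset (O × O))
    (hdisj : Disjoint V₁ V₂) (hk₁ : V₁.card = k) (hk₂ : V₂.card = k)
    (hE₁ : ∀ e ∈ E₁, e.1 ∈ V₁ ∧ e.2 ∈ V₁) (hE₂ : ∀ e ∈ E₂, e.1 ∈ V₂ ∧ e.2 ∈ V₂)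
    (hnoiso₁ : ∀ v ∈ V₁, ∃ e ∈ E₁, e.1 = v ∨ e.2 = v)
    (hnoiso₂ : ∀ v ∈ V₂, ∃ e ∈ E₂, e.1 = v ∨ e.2 = v)
    (pre add del : Finset (Fin k × Fin k)) (σ₁ σ₂ : Fin k → O)
    (h₁ : (∀ g ∈ pre, groundE σ₁ g ∈ (∅ : Finset (O × O))) ∧
      E₁ = ((∅ : Finset (O × O)) \ del.image (groundE σ₁)) ∪ add.image (groundE σ₁))
    (h₂ : (∀ g ∈ pre, groundE σ₂ g ∈ (∅ : Finset (O × O))) ∧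
      E₂ = ((∅ : Finset (O × O)) \ del.image (groundE σ₂)) ∪ add.image (groundE σ₂)) :
    ∃ f : O → O,
      Set.BijOn f ↑V₁ ↑V₂ ∧
      (∀ u ∈ V₁, ∀ v ∈ V₁, ((u, v) ∈ E₁ ↔ (f u, f v) ∈ E₂)) ∧
      (∀ i : Fin k, f (σ₁ i) = σ₂ i) := by
  obtain ⟨-, hE1eq⟩ := h₁
  obtain ⟨-, hE2eq⟩ := h₂
  simp only [Finset.empty_sdiff, Finset.empty_union] at hE1eq hE2eq
  have hsub : ∀ (V : Finset O) (E : Finset (O × O)) (σ : Fin k → O),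
      (∀ v ∈ V, ∃ e ∈ E, e.1 = v ∨ e.2 = v) → E = add.image (groundE σ) →
      V ⊆ Finset.image σ Finset.univ := by
    intro V E σ hno hEeq v hv
    obtain ⟨e, he, hve⟩ := hno v hv
    rw [hEeq, Finset.mem_image] at he
    obtain ⟨g, hg, rfl⟩ := he
    rcases hve with h | h
    · exact Finset.mem_image.2 ⟨g.1, Finset.mem_univ _, h⟩
    · exact Finset.mem_image.2 ⟨g.2, Finset.mem_univ _, h⟩
  have hsub₁ := hsub V₁ E₁ σ₁ hnoiso₁ hE1eq
  have hsub₂ := hsub V₂ E₂ σ₂ hnoiso₂ hE2eq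
  have hcard : ∀ (V : Finset O) (σ : Fin k → O), V.card = k →
      V ⊆ Finset.image σ Finset.univ →
      Finset.image σ Finset.univ = V ∧ Function.Injective σ := by
    intro V σ hkV hVsub
    have hle : (Finset.image σ Finset.univ).card ≤ V.card := by
      rw [hkV]
      exact le_trans Finset.card_image_le (by simp)
    have heq : V = Finset.image σ Finset.univ := Finset.eq_of_subset_of_card_le hVsub hle
    have hc : (Finset.image σ Finset.univ).card = (Finset.univ : Finset (Fin k)).card := by
      rw [← heq, hkV]; simp
    have hinj : Set.InjOn σ ↑(Finset.univ : Finset (Fin k)) := Finset.card_image_iff.1 hc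
    exact ⟨heq.symm, fun a b hab => hinj (by simp) (by simp) hab⟩
  obtain ⟨hV1, hinj₁⟩ := hcard V₁ σ₁ hk₁ hsub₁
  obtain ⟨hV2, hinj₂⟩ := hcard V₂ σ₂ hk₂ hsub₂
  choose ι hι using fun v (hv : v ∈ V₁) =>
    Finset.mem_image.1 (show v ∈ Finset.image σ₁ Finset.univ from hV1 ▸ hv)
  refine ⟨fun v => if h : v ∈ V₁ then σ₂ (ι v h) else v, ?_, ?_, ?_⟩
  · constructor
    · intro v hv
      simp only [Finset.mem_coe] at hv
      simp only [Finset.mem_coe, hv, dif_pos]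
      rw [← hV2]
      exact Finset.mem_image.2 ⟨ι v hv, Finset.mem_univ _, rfl⟩
    constructor
    · intro u hu v hv huv
      simp only [Finset.mem_coe] at hu hv
      simp only [hu, hv, dif_pos] at huv
      have := hinj₂ huv
      rw [← (hι u hu).2, ← (hι v hv).2, this]
    · intro w hw
      simp only [Finset.mem_coe] at hw
      obtain ⟨i, -, rfl⟩ := Finset.mem_image.1 (show w ∈ Finset.image σ₂ Finset.univ from hV2 ▸ hw)
      have hu : σ₁ i ∈ V₁ := hV1 ▸ Finset.mem_image.2 ⟨i, Finset.mem_univ _, rfl⟩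
      refine ⟨σ₁ i, hu, ?_⟩
      simp only [hu, dif_pos]
      congr 1
      exact hinj₁ (hι (σ₁ i) hu).2
  · intro u hu v hv
    simp only [hu, hv, dif_pos]
    have hiu : σ₁ (ι u hu) = u := (hι u hu).2
    have hiv : σ₁ (ι v hv) = v := (hι v hv).2
    constructor
    · intro h
      rw [hE1eq, Finset.mem_image] at h
      obtain ⟨g, hg, hgeq⟩ := h
      have h1 : σ₁ g.1 = u := congrArg Prod.fst hgeq
      have h2 : σ₁ g.2 = v := congrArg Prod.snd hgeq
      have e1 : g.1 = ι u hu := hinj₁ (by rw [h1, hiu])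
      have e2 : g.2 = ι v hv := hinj₁ (by rw [h2, hiv])
      rw [hE2eq, Finset.mem_image]
      exact ⟨g, hg, by simp [groundE, e1, e2]⟩
    · intro h
      rw [hE2eq, Finset.mem_image] at h
      obtain ⟨g, hg, hgeq⟩ := h
      have h1 : σ₂ g.1 = σ₂ (ι u hu) := congrArg Prod.fst hgeq
      have h2 : σ₂ g.2 = σ₂ (ι v hv) := congrArg Prod.snd hgeq
      have e1 : g.1 = ι u hu := hinj₂ h1
      have e2 : g.2 = ι v hv := hinj₂ h2
      rw [hE1eq, Finset.mem_image]
      exact ⟨g, hg, by simp [groundE, e1, e2, hiu, hiv]⟩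
  · intro i
    have hu : σ₁ i ∈ V₁ := hV1 ▸ Finset.mem_image.2 ⟨i, Finset.mem_univ _, rfl⟩
    simp only [hu, dif_pos]
    congr 1
    exact hinj₁ (hι (σ₁ i) hu).2
end
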